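/- arXiv:2006.08030 — 3 statements merged into one kernel-verified Lean document; each statement's English description precedes it below -/
import Mathlib

section
/- The sinθ distance satisfies a triangle-inequality-like bound: for n×r orthonormal-column matrices P₁, P₂, P₃, sinθ_max(P₁, P₃) ≤ sinθ_max(P₁, P₂) + sinθ_max(P₂, P₃). -/
open Matrix MeasureTheory

noncomputable def spNorm {m n : Type*} [Fintype m] [Fintype n] [DecidableEq n]
    (A : Matrix m n ℝ) : ℝ :=
  ‖LinearMap.toContinuousLinearMap (Matrix.toEuclideanLin A)‖

noncomputable def vnorm {n : Type*} [Fintype n] (x : n → ℝ) : ℝ :=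
  Real.sqrt (∑ i, x i ^ 2)

def selMat {n : ℕ} (T : Finset (Fin n)) : Matrix (Fin n) {i // i ∈ T} ℝ :=
  fun i j => if i = (j : Fin n) then 1 else 0

/-!
Write `Q₁ = 1 - P₁P₁ᵀ` and split `P₃ = P₂(P₂ᵀP₃) + (1 - P₂P₂ᵀ)P₃`. Then
`Q₁P₃ = (Q₁P₂)(P₂ᵀP₃) + Q₁((1 - P₂P₂ᵀ)P₃)`, and the two factors `P₂ᵀP₃` and `Q₁` are
contractions: the first is a product of (co)isometries, the second an orthogonal projection,
whose norm satisfies `‖Q‖² = ‖QᵀQ‖ = ‖Q‖` by the C⋆-identity.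
-/

open scoped Matrix.Norms.L2Operator

lemma spNorm_eq_l2_opNorm {m n : Type*} [Fintype m] [Fintype n] [DecidableEq n]
    (A : Matrix m n ℝ) : spNorm A = ‖A‖ := rfl

namespace Matrix

variable {𝕜 m n : Type*} [RCLike 𝕜] [Fintype m] [Fintype n]

lemma l2_opNorm_one_le [DecidableEq n] : ‖(1 : Matrix n n 𝕜)‖ ≤ 1 := by
  rw [← l2_opNorm_toEuclideanCLM, map_one]
  exact ContinuousLinearMap.norm_id_le

lemma l2_opNorm_le_one_of_conjTranspose_mul_self_eq_one [DecidableEq n] {P : Matrix m n 𝕜}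
    (hP : Pᴴ * P = 1) : ‖P‖ ≤ 1 := by
  have h : ‖P‖ * ‖P‖ ≤ 1 := by
    rw [← l2_opNorm_conjTranspose_mul_self, hP]
    exact l2_opNorm_one_le
  nlinarith [norm_nonneg P]

lemma l2_opNorm_le_one_of_isHermitian_of_isIdempotentElem [DecidableEq n] {Q : Matrix n n 𝕜}
    (hQ : Q.IsHermitian) (hQQ : IsIdempotentElem Q) : ‖Q‖ ≤ 1 := by
  have h : ‖Q‖ * ‖Q‖ = ‖Q‖ := by rw [← l2_opNorm_conjTranspose_mul_self, hQ.eq, hQQ.eq]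
  nlinarith [norm_nonneg Q]

lemma l2_opNorm_one_sub_mul_conjTranspose_le_one [DecidableEq m] [DecidableEq n] {P : Matrix m n 𝕜}
    (hP : Pᴴ * P = 1) : ‖1 - P * Pᴴ‖ ≤ 1 := by
  have hidem : IsIdempotentElem (P * Pᴴ) := by
    rw [IsIdempotentElem, Matrix.mul_assoc, ← Matrix.mul_assoc Pᴴ, hP, Matrix.one_mul]
  exact l2_opNorm_le_one_of_isHermitian_of_isIdempotentElem
    (isHermitian_one.sub (isHermitian_mul_conjTranspose_self P)) hidem.one_sub

lemma l2_opNorm_one_sub_mul_conjTranspose_mul_le [DecidableEq m] [DecidableEq n]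
    {P₁ P₂ P₃ : Matrix m n 𝕜} (h1 : P₁ᴴ * P₁ = 1) (h2 : P₂ᴴ * P₂ = 1) (h3 : P₃ᴴ * P₃ = 1) :
    ‖(1 - P₁ * P₁ᴴ) * P₃‖ ≤ ‖(1 - P₁ * P₁ᴴ) * P₂‖ + ‖(1 - P₂ * P₂ᴴ) * P₃‖ := by
  have hP₃ : P₂ * (P₂ᴴ * P₃) + (1 - P₂ * P₂ᴴ) * P₃ = P₃ := by
    rw [Matrix.sub_mul, Matrix.one_mul, Matrix.mul_assoc, add_sub_cancel]
  set Q₁ := 1 - P₁ * P₁ᴴ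
  have hsplit : Q₁ * P₃ = Q₁ * P₂ * (P₂ᴴ * P₃) + Q₁ * ((1 - P₂ * P₂ᴴ) * P₃) := by
    rw [Matrix.mul_assoc Q₁ P₂, ← Matrix.mul_add, hP₃]
  have hP₂P₃ : ‖P₂ᴴ * P₃‖ ≤ 1 :=
    calc ‖P₂ᴴ * P₃‖ ≤ ‖P₂ᴴ‖ * ‖P₃‖ := l2_opNorm_mul _ _
      _ ≤ 1 * 1 := by
        rw [l2_opNorm_conjTranspose]
        gcongr
        exacts [l2_opNorm_le_one_of_conjTranspose_mul_self_eq_one h2,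
          l2_opNorm_le_one_of_conjTranspose_mul_self_eq_one h3]
      _ = 1 := one_mul 1
  calc ‖Q₁ * P₃‖ ≤ ‖Q₁ * P₂‖ * ‖P₂ᴴ * P₃‖ + ‖Q₁‖ * ‖(1 - P₂ * P₂ᴴ) * P₃‖ := by
        rw [hsplit]
        exact (norm_add_le _ _).trans (add_le_add (l2_opNorm_mul _ _) (l2_opNorm_mul _ _))
    _ ≤ ‖Q₁ * P₂‖ * 1 + 1 * ‖(1 - P₂ * P₂ᴴ) * P₃‖ := by
        gcongr
        exact l2_opNorm_one_sub_mul_conjTranspose_le_one h1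
    _ = ‖Q₁ * P₂‖ + ‖(1 - P₂ * P₂ᴴ) * P₃‖ := by rw [mul_one, one_mul]

end Matrix

/-- Triangle-inequality-like bound for the sin-theta distance. -/
theorem stmt3 (n r : ℕ) (P₁ P₂ P₃ : Matrix (Fin n) (Fin r) ℝ)
    (h1 : P₁ᵀ * P₁ = 1) (h2 : P₂ᵀ * P₂ = 1) (h3 : P₃ᵀ * P₃ = 1) :
    spNorm (((1 : Matrix (Fin n) (Fin n) ℝ) - P₁ * P₁ᵀ) * P₃)
      ≤ spNorm (((1 : Matrix (Fin n) (Fin n) ℝ) - P₁ * P₁ᵀ) * P₂)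
        + spNorm (((1 : Matrix (Fin n) (Fin n) ℝ) - P₂ * P₂ᵀ) * P₃) := by
  simp only [spNorm_eq_l2_opNorm, ← conjTranspose_eq_transpose_of_trivial] at h1 h2 h3 ⊢
  exact l2_opNorm_one_sub_mul_conjTranspose_mul_le h1 h2 h3
end

section
/- Let y = Ψx + b where Ψ = I − P̂P̂' for an n×r orthonormal P̂, x is supported on T, and the least-squares estimate on the (correct) support is x̂ := I_T (I_T'ΨI_T)^{-1} I_T' y. If ‖I_T'P̂‖ ≤ δ < 1, then ‖x̂ − x‖ ≤ ‖b‖/(1−δ²). -/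
open Matrix MeasureTheory
open scoped Matrix.Norms.L2Operator

lemma vnorm_mulVec_le {m n : Type*} [Fintype m] [Fintype n] [DecidableEq n]
    (A : Matrix m n ℝ) (v : n → ℝ) : vnorm (A.mulVec v) ≤ ‖A‖ * vnorm v := by
  have h := Matrix.l2_opNorm_mulVec A ((EuclideanSpace.equiv n ℝ).symm v)
  rw [EuclideanSpace.norm_eq, EuclideanSpace.norm_eq] at h
  simpa [vnorm, sq_abs] using h

lemma selMat_t_mul_self {n : ℕ} (T : Finset (Fin n)) : (selMat T)ᵀ * selMat T = 1 := by
  ext j k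
  simp only [Matrix.mul_apply, transpose_apply, selMat, Matrix.one_apply]
  rw [Finset.sum_eq_single (j : Fin n)]
  · by_cases h : j = k
    · simp [h]
    · have : ¬((j : Fin n) = (k : Fin n)) := fun h' => h (Subtype.ext h')
      simp [h, this]
  · intro i _ hi
    simp [hi]
  · simp

lemma selMat_mul_t_mulVec {n : ℕ} (T : Finset (Fin n)) (x : Fin n → ℝ)
    (hsupp : ∀ i, i ∉ T → x i = 0) : (selMat T * (selMat T)ᵀ).mulVec x = x := by
  funext i
  have : ((selMat T)ᵀ.mulVec x) = fun k : {i // i ∈ T} => x ↑k := by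
    funext k
    simp only [Matrix.mulVec, dotProduct, transpose_apply, selMat]
    rw [Finset.sum_eq_single (k : Fin n)] <;> simp +contextual [eq_comm]
  rw [← Matrix.mulVec_mulVec, this]
  simp only [Matrix.mulVec, dotProduct, selMat]
  rw [Finset.univ_eq_attach, Finset.sum_attach T (fun j => (if i = j then (1:ℝ) else 0) * x j)]
  rw [Finset.sum_eq_single i]
  · by_cases h : i ∈ T <;> simp [h, hsupp i]
  · intro j _ hj; simp [Ne.symm hj]
  · intro h; simp [hsupp i h]

/-- Error bound for least squares on the correct support in projected CS. -/
theorem stmt11 (n r : ℕ) (δ : ℝ) (hδ0 : 0 ≤ δ) (hδ : δ < 1)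
    (Phat : Matrix (Fin n) (Fin r) ℝ) (horth : Phatᵀ * Phat = 1)
    (T : Finset (Fin n)) (x b y : Fin n → ℝ)
    (hsupp : ∀ i, i ∉ T → x i = 0)
    (hy : y = (((1 : Matrix (Fin n) (Fin n) ℝ) - Phat * Phatᵀ)).mulVec x + b)
    (hP : spNorm ((selMat T)ᵀ * Phat) ≤ δ) :
    vnorm (fun i =>
      ((selMat T *
        ((selMat T)ᵀ * ((1 : Matrix (Fin n) (Fin n) ℝ) - Phat * Phatᵀ) * selMat T)⁻¹ *
        (selMat T)ᵀ).mulVec y) i - x i)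
      ≤ vnorm b / (1 - δ ^ 2) := by
  classical
  set S := selMat T with hS
  set Ψ : Matrix (Fin n) (Fin n) ℝ := 1 - Phat * Phatᵀ with hΨ
  set M : Matrix {i // i ∈ T} (Fin r) ℝ := Sᵀ * Phat with hM
  set A : Matrix {i // i ∈ T} {i // i ∈ T} ℝ := Sᵀ * Ψ * S with hAdef
  have hMnorm : ‖M‖ ≤ δ := hP
  have hMt : ‖Mᵀ‖ ≤ δ := by
    have : Mᵀ = Mᴴ := (Matrix.conjTranspose_eq_transpose_of_trivial M).symm
    rw [this, Matrix.l2_opNorm_conjTranspose]; exact hMnorm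
  have hδ2 : δ ^ 2 < 1 := by nlinarith
  have hδ2pos : (0:ℝ) < 1 - δ ^ 2 := by linarith
  have hMM : ‖M * Mᵀ‖ ≤ δ ^ 2 := by
    calc ‖M * Mᵀ‖ ≤ ‖M‖ * ‖Mᵀ‖ := Matrix.l2_opNorm_mul M Mᵀ
    _ ≤ δ * δ := mul_le_mul hMnorm hMt (norm_nonneg _) hδ0
    _ = δ ^ 2 := (sq δ).symm
  have hlt : ‖M * Mᵀ‖ < 1 := lt_of_le_of_lt hMM hδ2
  have hST : Sᵀ * S = 1 := selMat_t_mul_self T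
  have hA : A = 1 - M * Mᵀ := by
    rw [hAdef, hΨ, hM, Matrix.mul_sub, Matrix.mul_one, Matrix.sub_mul, hST,
      Matrix.transpose_mul, Matrix.transpose_transpose]
    rw [Matrix.mul_assoc, Matrix.mul_assoc, Matrix.mul_assoc]
  have hAunit : IsUnit A := by
    rw [hA]; exact isUnit_one_sub_of_norm_lt_one hlt
  have hAinv : A⁻¹ * A = 1 :=
    Matrix.nonsing_inv_mul A ((Matrix.isUnit_iff_isUnit_det A).mp hAunit)
  -- norm bound on A⁻¹
  have hone : ‖(1 : Matrix {i // i ∈ T} {i // i ∈ T} ℝ)‖ ≤ 1 := by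
    rw [Matrix.cstar_norm_def, _root_.map_one]
    exact ContinuousLinearMap.norm_id_le
  have hpow : ∀ i : ℕ, ‖(M * Mᵀ) ^ i‖ ≤ (δ ^ 2) ^ i := by
    intro i
    induction i with
    | zero => simpa using hone
    | succ k ih =>
        calc ‖(M * Mᵀ) ^ (k+1)‖ = ‖(M * Mᵀ) ^ k * (M * Mᵀ)‖ := by rw [pow_succ]
        _ ≤ ‖(M * Mᵀ) ^ k‖ * ‖M * Mᵀ‖ := norm_mul_le _ _
        _ ≤ (δ ^ 2) ^ k * δ ^ 2 := mul_le_mul ih hMM (norm_nonneg _) (pow_nonneg (sq_nonneg δ) k)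
        _ = (δ ^ 2) ^ (k+1) := (pow_succ _ _).symm
  have hgeo : Summable (fun i : ℕ => (δ ^ 2) ^ i) :=
    summable_geometric_of_lt_one (sq_nonneg δ) hδ2
  have hsumm : Summable (fun i : ℕ => ‖(M * Mᵀ) ^ i‖) :=
    Summable.of_nonneg_of_le (fun i => norm_nonneg _) hpow hgeo
  have hAinvnorm : ‖A⁻¹‖ ≤ (1 - δ ^ 2)⁻¹ := by
    have h1 : A⁻¹ = ∑' i : ℕ, (M * Mᵀ) ^ i := by
      rw [hA, Matrix.nonsing_inv_eq_ringInverse, ← geom_series_eq_inverse _ hlt]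
    rw [h1]
    calc ‖∑' i : ℕ, (M * Mᵀ) ^ i‖ ≤ ∑' i : ℕ, ‖(M * Mᵀ) ^ i‖ := norm_tsum_le_tsum_norm hsumm
    _ ≤ ∑' i : ℕ, (δ ^ 2) ^ i := Summable.tsum_le_tsum hpow hsumm hgeo
    _ = (1 - δ ^ 2)⁻¹ := tsum_geometric_of_lt_one (sq_nonneg δ) hδ2
  -- norms of S
  have hSnorm : ‖S‖ ≤ 1 := by
    have h2 : ‖Sᴴ * S‖ = ‖S‖ * ‖S‖ := Matrix.l2_opNorm_conjTranspose_mul_self S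
    have h3 : Sᴴ = Sᵀ := Matrix.conjTranspose_eq_transpose_of_trivial S
    rw [h3, hST] at h2
    nlinarith [norm_nonneg S, hone, h2]
  have hStnorm : ‖Sᵀ‖ ≤ 1 := by
    have h3 : Sᵀ = Sᴴ := (Matrix.conjTranspose_eq_transpose_of_trivial S).symm
    rw [h3, Matrix.l2_opNorm_conjTranspose]; exact hSnorm
  -- error identity
  have hkey : (fun i => ((S * A⁻¹ * Sᵀ).mulVec y) i - x i) = (S * A⁻¹ * Sᵀ).mulVec b := by
    funext i
    have hx : (S * Sᵀ).mulVec x = x := selMat_mul_t_mulVec T x hsupp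
    have hmat : S * A⁻¹ * Sᵀ * Ψ * (S * Sᵀ) = S * Sᵀ := by
      have : S * A⁻¹ * Sᵀ * Ψ * (S * Sᵀ) = S * (A⁻¹ * (Sᵀ * Ψ * S)) * Sᵀ := by
        simp only [Matrix.mul_assoc]
      rw [this, ← hAdef, hAinv, Matrix.mul_one]
    have hclean : (S * A⁻¹ * Sᵀ).mulVec (Ψ.mulVec x) = x := by
      conv_lhs => rw [← hx]
      rw [Matrix.mulVec_mulVec, Matrix.mulVec_mulVec, hmat, hx]
    rw [hy, Matrix.mulVec_add, hclean]
    simp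
  rw [hkey]
  calc vnorm ((S * A⁻¹ * Sᵀ).mulVec b) ≤ ‖S * A⁻¹ * Sᵀ‖ * vnorm b := vnorm_mulVec_le _ b
  _ ≤ (1 - δ ^ 2)⁻¹ * vnorm b := by
      have hb : 0 ≤ vnorm b := Real.sqrt_nonneg _
      have hnorm : ‖S * A⁻¹ * Sᵀ‖ ≤ (1 - δ ^ 2)⁻¹ := by
        calc ‖S * A⁻¹ * Sᵀ‖ ≤ ‖S * A⁻¹‖ * ‖Sᵀ‖ := Matrix.l2_opNorm_mul _ _
        _ ≤ ‖S‖ * ‖A⁻¹‖ * ‖Sᵀ‖ :=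
            mul_le_mul_of_nonneg_right (Matrix.l2_opNorm_mul _ _) (norm_nonneg _)
        _ ≤ 1 * (1 - δ ^ 2)⁻¹ * 1 := by
            have h0 : (0:ℝ) ≤ (1 - δ ^ 2)⁻¹ := le_of_lt (inv_pos.mpr hδ2pos)
            have := mul_le_mul (mul_le_mul hSnorm hAinvnorm (norm_nonneg _) zero_le_one)
              hStnorm (norm_nonneg _) (by linarith [mul_le_mul hSnorm hAinvnorm (norm_nonneg _) zero_le_one])
            nlinarith [norm_nonneg (S * A⁻¹), norm_nonneg Sᵀ, norm_nonneg S, norm_nonneg A⁻¹, hAinvnorm, hSnorm, hStnorm, h0]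
        _ = (1 - δ ^ 2)⁻¹ := by ring
      exact mul_le_mul_of_nonneg_right hnorm hb
  _ = vnorm b / (1 - δ ^ 2) := by rw [div_eq_mul_inv, mul_comm]
end

section
/- Suppose the subspace change detection statistic uses B := (I − P̂_{j−1}P̂_{j−1}') L where L = P_j A with A ∈ ℝ^{r×α}, sinθ_max(P̂_{j−1}, P_{j−1}) ≤ ε, and sinθ_max(P_{j−1}, P_j) = Δ ≥ 9√f ε. If σ_min(A) ≥ √(0.9 λ⁻ α) then σ_max(B) ≥ (Δ − ε)√(0.9 λ⁻ α); conversely if L = P_{j−1}A (no change) and σ_max(A) ≤ √(1.1 λ⁺ α), then σ_max(B) ≤ ε √(1.1 λ⁺ α). -/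
open Matrix MeasureTheory

open scoped Matrix.Norms.L2Operator RealInnerProductSpace


namespace Sp19
variable {m n l : ℕ}

noncomputable abbrev mclm (A : Matrix (Fin m) (Fin n) ℝ) :
    EuclideanSpace ℝ (Fin n) →L[ℝ] EuclideanSpace ℝ (Fin m) :=
  LinearMap.toContinuousLinearMap (Matrix.toEuclideanLin A)

lemma norm_eq_mclm (A : Matrix (Fin m) (Fin n) ℝ) : ‖A‖ = ‖mclm A‖ := rfl

lemma mclm_apply (A : Matrix (Fin m) (Fin n) ℝ) (x : EuclideanSpace ℝ (Fin n)) :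
    mclm A x = (WithLp.equiv _ _).symm (A *ᵥ (WithLp.equiv _ _ x)) := by
  simp [Matrix.toEuclideanLin_apply]

lemma mclm_mul (A : Matrix (Fin m) (Fin n) ℝ) (B : Matrix (Fin n) (Fin l) ℝ)
    (x : EuclideanSpace ℝ (Fin l)) : mclm (A * B) x = mclm A (mclm B x) := by
  simp [mclm_apply, Matrix.mulVec_mulVec]

lemma mclm_one (x : EuclideanSpace ℝ (Fin n)) : mclm (1 : Matrix (Fin n) (Fin n) ℝ) x = x := by
  simp [mclm_apply]

lemma mclm_sub (A B : Matrix (Fin m) (Fin n) ℝ) (x : EuclideanSpace ℝ (Fin n)) :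
    mclm (A - B) x = mclm A x - mclm B x := by
  simp [mclm_apply, Matrix.sub_mulVec]

lemma mclm_adj (A : Matrix (Fin m) (Fin n) ℝ) (x : EuclideanSpace ℝ (Fin m))
    (y : EuclideanSpace ℝ (Fin n)) : ⟪mclm Aᵀ x, y⟫ = ⟪x, mclm A y⟫ := by
  have h : (Aᵀ : Matrix (Fin n) (Fin m) ℝ) = Aᴴ := (Matrix.conjTranspose_eq_transpose_of_trivial A).symm
  show ⟪Matrix.toEuclideanLin Aᵀ x, y⟫ = ⟪x, Matrix.toEuclideanLin A y⟫
  rw [h, Matrix.toEuclideanLin_conjTranspose_eq_adjoint, LinearMap.adjoint_inner_left]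

lemma normT (A : Matrix (Fin m) (Fin n) ℝ) : ‖Aᵀ‖ = ‖A‖ := by
  rw [← Matrix.conjTranspose_eq_transpose_of_trivial]
  exact Matrix.l2_opNorm_conjTranspose A

lemma norm_tmul (A : Matrix (Fin m) (Fin n) ℝ) : ‖Aᵀ * A‖ = ‖A‖ * ‖A‖ := by
  rw [← Matrix.conjTranspose_eq_transpose_of_trivial]
  exact Matrix.l2_opNorm_conjTranspose_mul_self A

lemma quad (S : Matrix (Fin n) (Fin n) ℝ) (x : EuclideanSpace ℝ (Fin n)) :
    ⟪x, mclm (1 - Sᵀ * S) x⟫ = ‖x‖ ^ 2 - ‖mclm S x‖ ^ 2 := by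
  rw [mclm_sub, inner_sub_right, mclm_one, mclm_mul, real_inner_self_eq_norm_sq]
  congr 1
  rw [← real_inner_self_eq_norm_sq, real_inner_comm, mclm_adj]

end Sp19

namespace Sp19

lemma clm_sym_norm_le {E : Type*} [NormedAddCommGroup E] [InnerProductSpace ℝ E] (T : E →L[ℝ] E)
    (hsym : ∀ x y : E, ⟪T x, y⟫ = ⟪x, T y⟫) {c : ℝ} (hc : 0 ≤ c)
    (h : ∀ x : E, ‖x‖ ≤ 1 → |⟪x, T x⟫| ≤ c) : ‖T‖ ≤ c := by
  have hq : ∀ z : E, |⟪z, T z⟫| ≤ c * ‖z‖ ^ 2 := by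
    intro z
    rcases eq_or_ne z 0 with rfl | hz
    · simp
    · have hzn : 0 < ‖z‖ := norm_pos_iff.mpr hz
      have h0 := h (‖z‖⁻¹ • z) (by
        rw [norm_smul, norm_inv, norm_norm, inv_mul_cancel₀ hzn.ne'])
      rw [T.map_smul, real_inner_smul_left, real_inner_smul_right, abs_mul, abs_mul,
        abs_inv, abs_norm] at h0
      calc |⟪z, T z⟫| = ‖z‖ ^ 2 * (‖z‖⁻¹ * (‖z‖⁻¹ * |⟪z, T z⟫|)) := by
            field_simp
        _ ≤ ‖z‖ ^ 2 * c := mul_le_mul_of_nonneg_left h0 (by positivity)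
        _ = c * ‖z‖ ^ 2 := by ring
  have hxy : ∀ x y : E, ‖x‖ ≤ 1 → ‖y‖ ≤ 1 → ⟪x, T y⟫ ≤ c := by
    intro x y hx hy
    have hyx : ⟪y, T x⟫ = ⟪x, T y⟫ := by
      rw [← hsym x y]; exact real_inner_comm _ _
    have hpol : ⟪x, T y⟫ = (⟪x + y, T (x + y)⟫ - ⟪x - y, T (x - y)⟫) / 4 := by
      rw [map_add, map_sub]
      simp only [inner_add_left, inner_add_right, inner_sub_left, inner_sub_right]
      rw [hyx]; ring
    have h1 := (abs_le.mp (hq (x + y))).2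
    have h2 := (abs_le.mp (hq (x - y))).1
    have hpar : ‖x + y‖ ^ 2 + ‖x - y‖ ^ 2 = 2 * (‖x‖ ^ 2 + ‖y‖ ^ 2) := by
      have := parallelogram_law_with_norm ℝ x y; linarith
    have hb : ‖x‖ ^ 2 + ‖y‖ ^ 2 ≤ 2 := by
      have h3 : ‖x‖ ^ 2 ≤ 1 := by nlinarith [norm_nonneg x]
      have h4 : ‖y‖ ^ 2 ≤ 1 := by nlinarith [norm_nonneg y]
      linarith
    rw [hpol]
    nlinarith [sq_nonneg (‖x + y‖), sq_nonneg (‖x - y‖)]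
  refine T.opNorm_le_bound hc fun z => ?_
  rcases eq_or_ne z 0 with rfl | hz
  · simp
  have hzn : 0 < ‖z‖ := norm_pos_iff.mpr hz
  rcases eq_or_ne (T z) 0 with hTz | hTz
  · rw [hTz]; simp; positivity
  have hTzn : 0 < ‖T z‖ := norm_pos_iff.mpr hTz
  have key : ⟪‖T z‖⁻¹ • T z, T (‖z‖⁻¹ • z)⟫ ≤ c := by
    refine hxy _ _ ?_ ?_ <;>
      rw [norm_smul, norm_inv, norm_norm, inv_mul_cancel₀ (by positivity)]
  rw [T.map_smul, real_inner_smul_left, real_inner_smul_right,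
    real_inner_self_eq_norm_sq] at key
  have : ‖T z‖⁻¹ * (‖z‖⁻¹ * ‖T z‖ ^ 2) = ‖T z‖ / ‖z‖ := by
    field_simp
  rw [this] at key
  rw [div_le_iff₀ hzn] at key
  linarith


variable {r : ℕ}

lemma Gsym (S : Matrix (Fin r) (Fin r) ℝ) (x y : EuclideanSpace ℝ (Fin r)) :
    ⟪mclm (1 - Sᵀ * S) x, y⟫ = ⟪x, mclm (1 - Sᵀ * S) y⟫ := by
  have ht : (1 - Sᵀ * S)ᵀ = 1 - Sᵀ * S := by
    simp [Matrix.transpose_sub, Matrix.transpose_mul]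
  conv_lhs => rw [← ht]
  exact mclm_adj _ x y

lemma norm_mulVec_le (A : Matrix (Fin m) (Fin n) ℝ) (x : EuclideanSpace ℝ (Fin n)) :
    ‖mclm A x‖ ≤ ‖A‖ * ‖x‖ := (mclm A).le_opNorm x

lemma upper_aux (S : Matrix (Fin r) (Fin r) ℝ) (hS : ‖S‖ ≤ 1) {c : ℝ}
    (hc : 0 ≤ c)
    (hlb : ∀ x : EuclideanSpace ℝ (Fin r), ‖x‖ ≤ 1 →
      ‖x‖ ^ 2 - ‖mclm S x‖ ^ 2 ≤ c) :
    ‖(1 : Matrix (Fin r) (Fin r) ℝ) - Sᵀ * S‖ ≤ c := by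
  rw [norm_eq_mclm]
  refine clm_sym_norm_le _ (Gsym S) hc fun x hx => ?_
  rw [quad, abs_of_nonneg]
  · exact hlb x hx
  · have h1 : ‖mclm S x‖ ≤ ‖x‖ := by
      calc ‖mclm S x‖ ≤ ‖S‖ * ‖x‖ := norm_mulVec_le S x
        _ ≤ 1 * ‖x‖ := by nlinarith [norm_nonneg x]
        _ = ‖x‖ := one_mul _
    nlinarith [norm_nonneg (mclm S x), norm_nonneg x]

lemma lower_aux (S : Matrix (Fin r) (Fin r) ℝ) (x : EuclideanSpace ℝ (Fin r)) (hx : ‖x‖ = 1) :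
    ‖x‖ ^ 2 - ‖mclm S x‖ ^ 2 ≤ ‖(1 : Matrix (Fin r) (Fin r) ℝ) - Sᵀ * S‖ := by
  rw [← quad]
  calc ⟪x, mclm (1 - Sᵀ * S) x⟫ ≤ ‖x‖ * ‖mclm (1 - Sᵀ * S) x‖ := real_inner_le_norm _ _
    _ ≤ ‖x‖ * (‖(1 : Matrix (Fin r) (Fin r) ℝ) - Sᵀ * S‖ * ‖x‖) :=
        mul_le_mul_of_nonneg_left (norm_mulVec_le _ x) (norm_nonneg x)
    _ = ‖(1 : Matrix (Fin r) (Fin r) ℝ) - Sᵀ * S‖ := by rw [hx]; ring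

lemma norm_one_sub_sing (S : Matrix (Fin r) (Fin r) ℝ) (hS : ‖S‖ ≤ 1)
    (hU : ¬ IsUnit S.det) : ‖(1 : Matrix (Fin r) (Fin r) ℝ) - Sᵀ * S‖ = 1 := by
  have hd : S.det = 0 := by simpa [isUnit_iff_ne_zero] using hU
  obtain ⟨v, hv, h0⟩ := (Matrix.exists_mulVec_eq_zero_iff).mpr hd
  refine le_antisymm (upper_aux S hS zero_le_one fun x hx => by
    nlinarith [norm_nonneg (mclm S x), norm_nonneg x]) ?_
  have hwn : ‖(WithLp.equiv 2 (Fin r → ℝ)).symm v‖ ≠ 0 := by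
    simp only [norm_ne_zero_iff]
    exact fun hc => hv (by simpa using congrArg (WithLp.equiv 2 (Fin r → ℝ)) hc)
  have hSw : mclm S ((WithLp.equiv 2 (Fin r → ℝ)).symm v) = 0 := by
    rw [mclm_apply]; simp [h0]
  set x : EuclideanSpace ℝ (Fin r) :=
    ‖(WithLp.equiv 2 (Fin r → ℝ)).symm v‖⁻¹ • (WithLp.equiv 2 (Fin r → ℝ)).symm v with hxdef
  have hx : ‖x‖ = 1 := by
    rw [hxdef, norm_smul, norm_inv, norm_norm, inv_mul_cancel₀ hwn]
  have hSx : mclm S x = 0 := by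
    rw [hxdef, (mclm S).map_smul, hSw, smul_zero]
  have h2 := lower_aux S x hx
  rw [hSx, hx] at h2
  simpa using h2

lemma norm_one_sub_inv (S : Matrix (Fin r) (Fin r) ℝ) (hr : 0 < r) (hS : ‖S‖ ≤ 1)
    (hU : IsUnit S.det) :
    ‖(1 : Matrix (Fin r) (Fin r) ℝ) - Sᵀ * S‖ = 1 - (‖S⁻¹‖⁻¹) ^ 2 := by
  haveI : Nonempty (Fin r) := ⟨⟨0, hr⟩⟩
  haveI : Nontrivial (Matrix (Fin r) (Fin r) ℝ) := Matrix.nonempty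
  set t := ‖S⁻¹‖ with htd
  have hinv : S⁻¹ * S = 1 := Matrix.nonsing_inv_mul S hU
  have ht1 : (1:ℝ) ≤ t := by
    calc (1 : ℝ) = ‖(1 : Matrix (Fin r) (Fin r) ℝ)‖ := norm_one.symm
      _ = ‖S⁻¹ * S‖ := by rw [hinv]
      _ ≤ ‖S⁻¹‖ * ‖S‖ := Matrix.l2_opNorm_mul _ _
      _ ≤ t * 1 := by nlinarith [norm_nonneg (S⁻¹)]
      _ = t := mul_one t
  have ht0 : (0:ℝ) < t := lt_of_lt_of_le one_pos ht1
  have hx_lb : ∀ x : EuclideanSpace ℝ (Fin r), ‖x‖ ≤ t * ‖mclm S x‖ := by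
    intro x
    calc ‖x‖ = ‖mclm (S⁻¹ * S) x‖ := by rw [hinv, mclm_one]
      _ = ‖mclm S⁻¹ (mclm S x)‖ := by rw [mclm_mul]
      _ ≤ t * ‖mclm S x‖ := norm_mulVec_le _ _
  have hcnn : (0:ℝ) ≤ 1 - t⁻¹ ^ 2 := by
    have h1 : t⁻¹ ≤ 1 := by rw [inv_le_one_iff₀]; right; exact ht1
    have h2 : (0:ℝ) < t⁻¹ := by positivity
    nlinarith
  have hupper : ‖(1 : Matrix (Fin r) (Fin r) ℝ) - Sᵀ * S‖ ≤ 1 - t⁻¹ ^ 2 := by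
    refine upper_aux S hS hcnn fun x hx => ?_
    have h2 : t⁻¹ * ‖x‖ ≤ ‖mclm S x‖ := by
      rw [inv_mul_le_iff₀ ht0]; exact hx_lb x
    have h3 : (t⁻¹ * ‖x‖) ^ 2 ≤ ‖mclm S x‖ ^ 2 :=
      pow_le_pow_left₀ (by positivity) h2 2
    have h4 : ‖x‖^2 ≤ 1 := by nlinarith [norm_nonneg x]
    have h5 : (0:ℝ) < t⁻¹ := by positivity
    nlinarith
  refine le_antisymm hupper ?_
  set g := ‖(1 : Matrix (Fin r) (Fin r) ℝ) - Sᵀ * S‖ with hgd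
  have hg0 : (0:ℝ) ≤ g := norm_nonneg _
  have hglt : g < 1 := by
    have : (0:ℝ) < t⁻¹ ^ 2 := by positivity
    linarith
  have h1g : (0:ℝ) < 1 - g := by linarith
  have hb : ∀ y : EuclideanSpace ℝ (Fin r), ‖mclm S⁻¹ y‖ ≤ Real.sqrt (1 - g)⁻¹ * ‖y‖ := by
    intro y
    rcases eq_or_ne y 0 with rfl | hy
    · simp
    have hSiy : mclm S (mclm S⁻¹ y) = y := by
      rw [← mclm_mul, Matrix.mul_nonsing_inv S hU, mclm_one]
    have hTin : ‖mclm S⁻¹ y‖ ≠ 0 := by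
      intro hc
      rw [norm_eq_zero] at hc
      rw [hc, map_zero] at hSiy
      exact hy hSiy.symm
    set a := ‖mclm S⁻¹ y‖ with had
    set x : EuclideanSpace ℝ (Fin r) := a⁻¹ • mclm S⁻¹ y with hxdef
    have hx : ‖x‖ = 1 := by
      rw [hxdef, norm_smul, norm_inv, norm_norm, ← had, inv_mul_cancel₀ hTin]
    have hSx : mclm S x = a⁻¹ • y := by
      rw [hxdef, (mclm S).map_smul, hSiy]
    have hq := lower_aux S x hx
    rw [hx, hSx, norm_smul, norm_inv, norm_norm] at hq
    have hexp : (a⁻¹ * ‖y‖) ^ 2 * a ^ 2 = (a⁻¹ * a)^2 * ‖y‖^2 := by ring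
    rw [inv_mul_cancel₀ hTin] at hexp
    have key : (1 - g) * a ^ 2 ≤ ‖y‖ ^ 2 := by nlinarith [sq_nonneg a]
    have goal2 : a ^ 2 ≤ (1-g)⁻¹ * ‖y‖ ^ 2 := by
      calc a^2 = (1-g)⁻¹ * ((1-g) * a^2) := by
            rw [← mul_assoc, inv_mul_cancel₀ h1g.ne', one_mul]
        _ ≤ (1-g)⁻¹ * ‖y‖^2 := mul_le_mul_of_nonneg_left key (by positivity)
    have ha0 : (0:ℝ) ≤ a := had ▸ norm_nonneg _
    calc a = Real.sqrt (a^2) := (Real.sqrt_sq ha0).symm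
      _ ≤ Real.sqrt ((1-g)⁻¹ * ‖y‖^2) := Real.sqrt_le_sqrt goal2
      _ = Real.sqrt (1-g)⁻¹ * ‖y‖ := by
          rw [Real.sqrt_mul (by positivity), Real.sqrt_sq (norm_nonneg y)]
  have htle : t ≤ Real.sqrt (1 - g)⁻¹ := by
    rw [htd, norm_eq_mclm]
    exact (mclm S⁻¹).opNorm_le_bound (Real.sqrt_nonneg _) hb
  have ht2 : t ^ 2 ≤ (1 - g)⁻¹ := by
    have h := pow_le_pow_left₀ ht0.le htle 2
    rwa [Real.sq_sqrt (by positivity)] at h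
  have h5 : t^2 * (1-g) ≤ 1 := by
    have h6 := mul_le_mul_of_nonneg_right ht2 h1g.le
    rwa [inv_mul_cancel₀ h1g.ne'] at h6
  have ht2pos : (0:ℝ) < t ^ 2 := by positivity
  have h7 : (1 - t⁻¹^2) * t^2 = t^2 - 1 := by field_simp
  nlinarith [ht2pos, h5, h7]

end Sp19

namespace Sp19
variable {n r : ℕ}

lemma spNorm_eq {m n : Type*} [Fintype m] [Fintype n] [DecidableEq n] (A : Matrix m n ℝ) :
    spNorm A = ‖A‖ := rfl

lemma vnorm_eq {k : ℕ} (x : Fin k → ℝ) : vnorm x = ‖(WithLp.equiv 2 (Fin k → ℝ)).symm x‖ := by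
  rw [EuclideanSpace.norm_eq, vnorm]
  simp [Real.norm_eq_abs, sq_abs]

lemma key6 (S : Matrix (Fin r) (Fin r) ℝ) (hS : ‖S‖ ≤ 1) :
    ‖(1:Matrix (Fin r) (Fin r) ℝ) - Sᵀ*S‖ = ‖(1:Matrix (Fin r) (Fin r) ℝ) - S*Sᵀ‖ := by
  rcases Nat.eq_zero_or_pos r with hr | hr
  · subst hr
    rw [Subsingleton.elim (Sᵀ*S) (S*Sᵀ)]
  rcases em (IsUnit S.det) with hU | hU
  · have h1 := norm_one_sub_inv S hr hS hU
    have hSt : ‖Sᵀ‖ ≤ 1 := by rw [normT]; exact hS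
    have hUt : IsUnit Sᵀ.det := by rwa [Matrix.det_transpose]
    have h2 := norm_one_sub_inv Sᵀ hr hSt hUt
    rw [Matrix.transpose_transpose] at h2
    rw [h1, h2, ← Matrix.transpose_nonsing_inv, normT]
  · have h1 := norm_one_sub_sing S hS hU
    have h2 := norm_one_sub_sing Sᵀ (by rw [normT]; exact hS)
      (by rwa [Matrix.det_transpose])
    rw [Matrix.transpose_transpose] at h2
    rw [h1, h2]

lemma norm_one_le : ‖(1 : Matrix (Fin r) (Fin r) ℝ)‖ ≤ 1 := by
  have h3 := norm_tmul (1 : Matrix (Fin r) (Fin r) ℝ)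
  rw [Matrix.transpose_one, mul_one] at h3
  nlinarith [norm_nonneg (1 : Matrix (Fin r) (Fin r) ℝ)]

lemma norm_orth_le_one (P : Matrix (Fin n) (Fin r) ℝ) (h : Pᵀ*P = 1) : ‖P‖ ≤ 1 := by
  have h1 : ‖P‖ * ‖P‖ = ‖(1 : Matrix (Fin r) (Fin r) ℝ)‖ := by rw [← norm_tmul, h]
  nlinarith [norm_nonneg P, norm_one_le (r := r)]

lemma proj_idem (Q : Matrix (Fin n) (Fin r) ℝ) (h : Qᵀ*Q = 1) :
    ((1:Matrix (Fin n) (Fin n) ℝ) - Q*Qᵀ) * ((1:Matrix (Fin n) (Fin n) ℝ) - Q*Qᵀ)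
      = (1:Matrix (Fin n) (Fin n) ℝ) - Q*Qᵀ := by
  have hQQ : Q*Qᵀ*(Q*Qᵀ) = Q*Qᵀ := by
    rw [Matrix.mul_assoc, ← Matrix.mul_assoc Qᵀ Q Qᵀ, h, Matrix.one_mul]
  have hexp : ((1:Matrix (Fin n) (Fin n) ℝ) - Q*Qᵀ) * ((1:Matrix (Fin n) (Fin n) ℝ) - Q*Qᵀ)
      = 1 - Q*Qᵀ - Q*Qᵀ + Q*Qᵀ*(Q*Qᵀ) := by noncomm_ring
  rw [hexp, hQQ]
  abel

lemma proj_symm (Q : Matrix (Fin n) (Fin r) ℝ) :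
    ((1:Matrix (Fin n) (Fin n) ℝ) - Q*Qᵀ)ᵀ = (1:Matrix (Fin n) (Fin n) ℝ) - Q*Qᵀ := by
  simp [Matrix.transpose_sub, Matrix.transpose_mul]

lemma norm_proj_le_one (Q : Matrix (Fin n) (Fin r) ℝ) (h : Qᵀ*Q = 1) :
    ‖(1:Matrix (Fin n) (Fin n) ℝ) - Q*Qᵀ‖ ≤ 1 := by
  have h1 : ‖(1:Matrix (Fin n) (Fin n) ℝ) - Q*Qᵀ‖ * ‖(1:Matrix (Fin n) (Fin n) ℝ) - Q*Qᵀ‖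
      = ‖(1:Matrix (Fin n) (Fin n) ℝ) - Q*Qᵀ‖ := by
    conv_lhs => rw [← norm_tmul, proj_symm, proj_idem Q h]
  nlinarith [norm_nonneg ((1:Matrix (Fin n) (Fin n) ℝ) - Q*Qᵀ)]

lemma sq_sin (P Q : Matrix (Fin n) (Fin r) ℝ) (hP : Pᵀ*P = 1) (hQ : Qᵀ*Q = 1) :
    ‖((1:Matrix (Fin n) (Fin n) ℝ) - Q*Qᵀ)*P‖^2
      = ‖(1:Matrix (Fin r) (Fin r) ℝ) - (Qᵀ*P)ᵀ*(Qᵀ*P)‖ := by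
  have e1 : (((1:Matrix (Fin n) (Fin n) ℝ) - Q*Qᵀ)*P)ᵀ * (((1:Matrix (Fin n) (Fin n) ℝ) - Q*Qᵀ)*P)
      = (1:Matrix (Fin r) (Fin r) ℝ) - (Qᵀ*P)ᵀ*(Qᵀ*P) := by
    rw [Matrix.transpose_mul, proj_symm, Matrix.mul_assoc,
      ← Matrix.mul_assoc ((1:Matrix (Fin n) (Fin n) ℝ) - Q*Qᵀ), proj_idem Q hQ]
    rw [Matrix.sub_mul, Matrix.one_mul, Matrix.mul_sub, hP]
    congr 1
    simp only [Matrix.transpose_mul, Matrix.transpose_transpose, Matrix.mul_assoc]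
  rw [sq, ← norm_tmul, e1]

lemma sin_symm (P Q : Matrix (Fin n) (Fin r) ℝ) (hP : Pᵀ*P = 1) (hQ : Qᵀ*Q = 1) :
    ‖((1:Matrix (Fin n) (Fin n) ℝ) - Q*Qᵀ)*P‖ = ‖((1:Matrix (Fin n) (Fin n) ℝ) - P*Pᵀ)*Q‖ := by
  have h1 := sq_sin P Q hP hQ
  have h2 := sq_sin Q P hQ hP
  have hS : ‖Qᵀ*P‖ ≤ 1 := by
    calc ‖Qᵀ*P‖ ≤ ‖Qᵀ‖ * ‖P‖ := Matrix.l2_opNorm_mul _ _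
      _ ≤ 1 * 1 := by
          have := norm_orth_le_one P hP
          have h4 : ‖Qᵀ‖ ≤ 1 := by rw [normT]; exact norm_orth_le_one Q hQ
          have := norm_nonneg (Qᵀ)
          have := norm_nonneg P
          nlinarith
      _ = 1 := one_mul 1
  have hkey := key6 (Qᵀ*P) hS
  have h2' : ‖((1:Matrix (Fin n) (Fin n) ℝ) - P*Pᵀ)*Q‖^2
      = ‖(1:Matrix (Fin r) (Fin r) ℝ) - (Qᵀ*P)*(Qᵀ*P)ᵀ‖ := by
    rw [h2]
    congr 2
    simp only [Matrix.transpose_mul, Matrix.transpose_transpose]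
  have : ‖((1:Matrix (Fin n) (Fin n) ℝ) - Q*Qᵀ)*P‖^2
      = ‖((1:Matrix (Fin n) (Fin n) ℝ) - P*Pᵀ)*Q‖^2 := by rw [h1, h2', hkey]
  have ha := norm_nonneg (((1:Matrix (Fin n) (Fin n) ℝ) - Q*Qᵀ)*P)
  have hb := norm_nonneg (((1:Matrix (Fin n) (Fin n) ℝ) - P*Pᵀ)*Q)
  nlinarith

end Sp19

open Sp19 in
/-- Deterministic separation of the change-detection statistic. -/
theorem stmt19 (n r α : ℕ) (ε Δ f lamMinus lamPlus : ℝ)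
    (hε : 0 ≤ ε) (hf : 1 ≤ f) (hlamMinus : 0 < lamMinus) (hlamPlus : 0 < lamPlus)
    (Phat Pjm Pj : Matrix (Fin n) (Fin r) ℝ)
    (horth1 : Phatᵀ * Phat = 1) (horth2 : Pjmᵀ * Pjm = 1) (horth3 : Pjᵀ * Pj = 1)
    (hest : spNorm (((1 : Matrix (Fin n) (Fin n) ℝ) - Phat * Phatᵀ) * Pjm) ≤ ε)
    (hΔdef : spNorm (((1 : Matrix (Fin n) (Fin n) ℝ) - Pjm * Pjmᵀ) * Pj) = Δ)
    (hsep : 9 * Real.sqrt f * ε ≤ Δ)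
    (A : Matrix (Fin r) (Fin α) ℝ) :
    ((∀ u : Fin r → ℝ,
        Real.sqrt (0.9 * lamMinus * α) * vnorm u ≤ vnorm (Aᵀ.mulVec u)) →
      (Δ - ε) * Real.sqrt (0.9 * lamMinus * α)
        ≤ spNorm (((1 : Matrix (Fin n) (Fin n) ℝ) - Phat * Phatᵀ) * (Pj * A))) ∧
    ((spNorm A ≤ Real.sqrt (1.1 * lamPlus * α)) →
      spNorm (((1 : Matrix (Fin n) (Fin n) ℝ) - Phat * Phatᵀ) * (Pjm * A))
        ≤ ε * Real.sqrt (1.1 * lamPlus * α)) := by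
  classical
  set M : Matrix (Fin n) (Fin n) ℝ := 1 - Phat * Phatᵀ with hM
  set N : Matrix (Fin n) (Fin n) ℝ := 1 - Pjm * Pjmᵀ with hN
  rw [spNorm_eq] at hest hΔdef
  -- the key lower bound on ‖M * Pj‖
  have hMPj : Δ - ε ≤ ‖M * Pj‖ := by
    have hdecomp : N * Pj = N * (M * Pj) + (N * Phat) * (Phatᵀ * Pj) := by
      have hMP : M * Pj = Pj - Phat * (Phatᵀ * Pj) := by
        rw [hM, Matrix.sub_mul, Matrix.one_mul, Matrix.mul_assoc]
      rw [hMP, Matrix.mul_sub, Matrix.mul_assoc, sub_add_cancel]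
    have hsym : ‖N * Phat‖ = ‖M * Pjm‖ := sin_symm Phat Pjm horth1 horth2
    have h1 : ‖N * Pj‖ ≤ ‖N * (M * Pj)‖ + ‖(N * Phat) * (Phatᵀ * Pj)‖ := by
      rw [hdecomp]; exact norm_add_le _ _
    have h2 : ‖N * (M * Pj)‖ ≤ ‖M * Pj‖ := by
      calc ‖N * (M * Pj)‖ ≤ ‖N‖ * ‖M * Pj‖ := Matrix.l2_opNorm_mul _ _
        _ ≤ 1 * ‖M * Pj‖ := by
            have := norm_proj_le_one Pjm horth2
            have := norm_nonneg (M * Pj)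
            nlinarith
        _ = ‖M * Pj‖ := one_mul _
    have h3 : ‖(N * Phat) * (Phatᵀ * Pj)‖ ≤ ε := by
      have h4 : ‖Phatᵀ * Pj‖ ≤ 1 := by
        calc ‖Phatᵀ * Pj‖ ≤ ‖Phatᵀ‖ * ‖Pj‖ := Matrix.l2_opNorm_mul _ _
          _ ≤ 1 := by
              have h5 : ‖Phatᵀ‖ ≤ 1 := by
                rw [normT]; exact norm_orth_le_one Phat horth1
              have h6 := norm_orth_le_one Pj horth3
              have := norm_nonneg (Phatᵀ)
              have := norm_nonneg Pj
              nlinarith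
      calc ‖(N * Phat) * (Phatᵀ * Pj)‖ ≤ ‖N * Phat‖ * ‖Phatᵀ * Pj‖ := Matrix.l2_opNorm_mul _ _
        _ ≤ ε := by
            rw [hsym]
            have := norm_nonneg (M * Pjm)
            nlinarith
    have h5 : Δ ≤ ‖M * Pj‖ + ε := by rw [← hΔdef]; linarith
    linarith
  constructor
  · -- changed case
    intro hA
    rw [spNorm_eq]
    rcases eq_or_lt_of_le (Real.sqrt_nonneg (0.9 * lamMinus * (α:ℝ))) with hc0 | hc0
    · rw [← hc0, mul_zero]
      exact norm_nonneg _
    have hMsym : Mᵀ = M := by rw [hM]; simp [Matrix.transpose_sub, Matrix.transpose_mul]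
    have hWt : (Pjᵀ * M)ᵀ = M * Pj := by
      rw [Matrix.transpose_mul, Matrix.transpose_transpose, hMsym]
    have hWnorm : ‖Pjᵀ * M‖ = ‖M * Pj‖ := by rw [← hWt, Sp19.normT]
    have hbound : ∀ u : EuclideanSpace ℝ (Fin n),
        ‖mclm (Pjᵀ * M) u‖ ≤ (Real.sqrt (0.9 * lamMinus * (α:ℝ)))⁻¹ * ‖Aᵀ * (Pjᵀ * M)‖ * ‖u‖ := by
      intro u
      have h1 := hA ((Pjᵀ * M) *ᵥ (WithLp.equiv 2 (Fin n → ℝ)) u)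
      rw [vnorm_eq, vnorm_eq, Matrix.mulVec_mulVec] at h1
      have h1' : Real.sqrt (0.9 * lamMinus * (α:ℝ)) * ‖mclm (Pjᵀ * M) u‖
          ≤ ‖mclm (Aᵀ * (Pjᵀ * M)) u‖ := by
        rw [mclm_apply, mclm_apply]
        exact h1
      have h2 : ‖mclm (Aᵀ * (Pjᵀ * M)) u‖ ≤ ‖Aᵀ * (Pjᵀ * M)‖ * ‖u‖ := norm_mulVec_le _ _
      have h3 : ‖mclm (Pjᵀ * M) u‖
          ≤ (Real.sqrt (0.9 * lamMinus * (α:ℝ)))⁻¹ * (‖Aᵀ * (Pjᵀ * M)‖ * ‖u‖) := by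
        rw [le_inv_mul_iff₀ hc0]
        exact h1'.trans h2
      calc ‖mclm (Pjᵀ * M) u‖
          ≤ (Real.sqrt (0.9 * lamMinus * (α:ℝ)))⁻¹ * (‖Aᵀ * (Pjᵀ * M)‖ * ‖u‖) := h3
        _ = (Real.sqrt (0.9 * lamMinus * (α:ℝ)))⁻¹ * ‖Aᵀ * (Pjᵀ * M)‖ * ‖u‖ := by ring
    have hWle : ‖Pjᵀ * M‖ ≤ (Real.sqrt (0.9 * lamMinus * (α:ℝ)))⁻¹ * ‖Aᵀ * (Pjᵀ * M)‖ := by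
      rw [Sp19.norm_eq_mclm]
      exact (mclm (Pjᵀ * M)).opNorm_le_bound (by positivity) hbound
    have hcW : Real.sqrt (0.9 * lamMinus * (α:ℝ)) * ‖Pjᵀ * M‖ ≤ ‖Aᵀ * (Pjᵀ * M)‖ := by
      rw [← le_inv_mul_iff₀ hc0]
      exact hWle
    have hfin : ‖Aᵀ * (Pjᵀ * M)‖ = ‖M * (Pj * A)‖ := by
      rw [← Sp19.normT (Aᵀ * (Pjᵀ * M)), Matrix.transpose_mul, Matrix.transpose_transpose, hWt,
        Matrix.mul_assoc]
    calc (Δ - ε) * Real.sqrt (0.9 * lamMinus * (α:ℝ))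
        ≤ ‖M * Pj‖ * Real.sqrt (0.9 * lamMinus * (α:ℝ)) :=
          mul_le_mul_of_nonneg_right hMPj hc0.le
      _ = Real.sqrt (0.9 * lamMinus * (α:ℝ)) * ‖Pjᵀ * M‖ := by rw [hWnorm]; ring
      _ ≤ ‖Aᵀ * (Pjᵀ * M)‖ := hcW
      _ = ‖M * (Pj * A)‖ := hfin
  · -- unchanged case
    intro hA
    rw [spNorm_eq] at *
    calc ‖M * (Pjm * A)‖ = ‖(M * Pjm) * A‖ := by rw [Matrix.mul_assoc]
      _ ≤ ‖M * Pjm‖ * ‖A‖ := Matrix.l2_opNorm_mul _ _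
      _ ≤ ε * Real.sqrt (1.1 * lamPlus * α) :=
          mul_le_mul hest hA (norm_nonneg A) hε
end
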